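/- For every admissible integer n, the maximum number of forks in a chain–collider–fork decomposition of TT_n equals n(n−2)/4 when n is even, and equals (n−1)²/4 when n is odd. -/
import Mathlib


/-- The arc set of the transitive tournament `TT n` on vertices `Fin n`
(vertex `v_{i+1}` of the paper is index `i`): there is an arc `(i, j)` iff `i < j`. -/
def ttArcs (n : ℕ) : Finset (Fin n × Fin n) :=
  Finset.univ.filter fun p => p.1 < p.2

/-- A chain: a two-arc block `{(i,j), (j,k)}` with `i < j < k`. -/
def IsChainMotif {n : ℕ} (b : Finset (Fin n × Fin n)) : Prop :=
  ∃ i j k : Fin n, i < j ∧ j < k ∧ b = {(i, j), (j, k)}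

/-- A collider: a two-arc block `{(i,j), (k,j)}` with `i, k < j` and `i ≠ k`. -/
def IsColliderMotif {n : ℕ} (b : Finset (Fin n × Fin n)) : Prop :=
  ∃ i k j : Fin n, i < j ∧ k < j ∧ i ≠ k ∧ b = {(i, j), (k, j)}

/-- A fork: a two-arc block `{(i,j), (i,k)}` with `i < j`, `i < k` and `j ≠ k`. -/
def IsForkMotif {n : ℕ} (b : Finset (Fin n × Fin n)) : Prop :=
  ∃ i j k : Fin n, i < j ∧ i < k ∧ j ≠ k ∧ b = {(i, j), (i, k)}

instance {n : ℕ} : DecidablePred (IsChainMotif (n := n)) := fun b => by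
  unfold IsChainMotif; infer_instance

instance {n : ℕ} : DecidablePred (IsColliderMotif (n := n)) := fun b => by
  unfold IsColliderMotif; infer_instance

instance {n : ℕ} : DecidablePred (IsForkMotif (n := n)) := fun b => by
  unfold IsForkMotif; infer_instance

/-- `P` is a decomposition of the arc set of `TT n`: its blocks are pairwise
disjoint and their union is the whole arc set. -/
def IsTTDecomposition {n : ℕ} (P : Finset (Finset (Fin n × Fin n))) : Prop :=
  (P : Set (Finset (Fin n × Fin n))).PairwiseDisjoint id ∧ P.sup id = ttArcs n

/-- `n` is admissible iff `n ≡ 0` or `1 (mod 4)`. -/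
def Admissible (n : ℕ) : Prop := n % 4 = 0 ∨ n % 4 = 1

-- === auxiliary lemmas ===
set_option maxRecDepth 10000

lemma mem_ttArcs {n : ℕ} {p : Fin n × Fin n} : p ∈ ttArcs n ↔ p.1.val < p.2.val := by
  rw [ttArcs, Finset.mem_filter]
  exact ⟨fun h => h.2, fun h => ⟨Finset.mem_univ _, h⟩⟩

def phiN (n : ℕ) (p : ℕ × ℕ) : ℕ × ℕ :=
  if p.2 = n - 1 ∧ p.1 % 2 = n % 2 then
    (if p.1 % 4 = n % 4 then (p.1 + 2, p.2) else (p.1 - 2, p.2))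
  else if (p.2 - p.1) % 2 = 1 then (p.1, p.2 + 1) else (p.1, p.2 - 1)

lemma phiN_mem {n i j : ℕ} (hij : i < j) (hj : j < n) :
    (phiN n (i, j)).1 < (phiN n (i, j)).2 ∧ (phiN n (i, j)).2 < n := by
  simp only [phiN]; split_ifs <;> simp_all <;> omega

lemma phiN_invol {n i j : ℕ} (hadm : n % 4 = 0 ∨ n % 4 = 1) (hij : i < j) (hj : j < n) :
    phiN n (phiN n (i, j)) = (i, j) := by
  simp only [phiN, Prod.ext_iff]; split_ifs <;> simp_all <;> omega

lemma phiN_ne {n i j : ℕ} (hadm : n % 4 = 0 ∨ n % 4 = 1) (hij : i < j) (hj : j < n) :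
    phiN n (i, j) ≠ (i, j) := by
  simp only [phiN, Prod.ext_iff, ne_eq]; split_ifs <;> simp_all <;> omega

lemma phiN_fork {n i j : ℕ} (hij : i < j) (hj : j < n)
    (h : ¬(j = n - 1 ∧ i % 2 = n % 2)) :
    (phiN n (i, j)).1 = i ∧ (phiN n (i, j)).2 ≠ j ∧ i < (phiN n (i, j)).2 := by
  simp only [phiN]; split_ifs <;> simp_all <;> omega

lemma phiN_res {n i j : ℕ} (hadm : n % 4 = 0 ∨ n % 4 = 1) (hij : i < j) (hj : j < n)
    (h : j = n - 1 ∧ i % 2 = n % 2) :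
    (phiN n (i, j)).2 = j ∧ (phiN n (i, j)).1 ≠ i := by
  simp only [phiN]; split_ifs <;> simp_all <;> omega

lemma phiN_fork_cond {n i j : ℕ} (hij : i < j) (hj : j < n)
    (h : ¬(j = n - 1 ∧ i % 2 = n % 2)) :
    ¬((phiN n (i, j)).2 = n - 1 ∧ (phiN n (i, j)).1 % 2 = n % 2) := by
  simp only [phiN]; split_ifs <;> simp_all <;> omega

def phiF {n : ℕ} (p : Fin n × Fin n) : Fin n × Fin n :=
  (⟨(phiN n (p.1.val, p.2.val)).1 % n, Nat.mod_lt _ p.1.pos⟩,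
   ⟨(phiN n (p.1.val, p.2.val)).2 % n, Nat.mod_lt _ p.1.pos⟩)

lemma phiF_val {n : ℕ} {p : Fin n × Fin n} (hp : p ∈ ttArcs n) :
    ((phiF p).1.val = (phiN n (p.1.val, p.2.val)).1 ∧
     (phiF p).2.val = (phiN n (p.1.val, p.2.val)).2) := by
  rw [mem_ttArcs] at hp
  have h := phiN_mem hp p.2.isLt
  simp [phiF, Nat.mod_eq_of_lt, h.2, Nat.mod_eq_of_lt (lt_trans h.1 h.2)]

lemma phiF_mem {n : ℕ} {p : Fin n × Fin n} (hp : p ∈ ttArcs n) : phiF p ∈ ttArcs n := by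
  have h := phiN_mem (mem_ttArcs.1 hp) p.2.isLt
  rw [mem_ttArcs, (phiF_val hp).1, (phiF_val hp).2]
  exact h.1

lemma phiF_invol {n : ℕ} (hadm : n % 4 = 0 ∨ n % 4 = 1) {p : Fin n × Fin n}
    (hp : p ∈ ttArcs n) : phiF (phiF p) = p := by
  have h1 := phiF_val hp
  have h2 := phiF_val (phiF_mem hp)
  have h3 := phiN_invol hadm (mem_ttArcs.1 hp) p.2.isLt
  have e : (phiN n ((phiF p).1.val, (phiF p).2.val)) = (p.1.val, p.2.val) := by
    rw [h1.1, h1.2]; exact h3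
  ext
  · rw [h2.1, e]
  · rw [h2.2, e]

lemma phiF_ne {n : ℕ} (hadm : n % 4 = 0 ∨ n % 4 = 1) {p : Fin n × Fin n}
    (hp : p ∈ ttArcs n) : phiF p ≠ p := by
  have h1 := phiF_val hp
  have h3 := phiN_ne hadm (mem_ttArcs.1 hp) p.2.isLt
  intro he
  apply h3
  rw [he] at h1
  exact Prod.ext h1.1.symm h1.2.symm

lemma phiF_fork_cond {n : ℕ} {p : Fin n × Fin n} (hp : p ∈ ttArcs n)
    (h : ¬(p.2.val = n - 1 ∧ p.1.val % 2 = n % 2)) :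
    ¬((phiF p).2.val = n - 1 ∧ (phiF p).1.val % 2 = n % 2) := by
  rw [(phiF_val hp).1, (phiF_val hp).2]
  exact phiN_fork_cond (mem_ttArcs.1 hp) p.2.isLt h

lemma blk_fork {n : ℕ} {p : Fin n × Fin n} (hp : p ∈ ttArcs n)
    (h : ¬(p.2.val = n - 1 ∧ p.1.val % 2 = n % 2)) :
    IsForkMotif ({p, phiF p} : Finset (Fin n × Fin n)) := by
  obtain ⟨h1, h2, h3⟩ := phiN_fork (mem_ttArcs.1 hp) p.2.isLt h
  have hv := phiF_val hp
  have e1 : (phiF p).1 = p.1 := Fin.ext (by rw [hv.1, h1])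
  refine ⟨p.1, p.2, (phiF p).2, mem_ttArcs.1 hp, ?_, ?_, ?_⟩
  · show p.1.val < (phiF p).2.val
    rw [hv.2]; exact h3
  · intro he
    apply h2
    rw [← hv.2, ← he]
  · have e2 : ((p.1, (phiF p).2) : Fin n × Fin n) = phiF p := by
      rw [← e1]
    rw [Prod.mk.eta, e2]

lemma blk_res {n : ℕ} (hadm : n % 4 = 0 ∨ n % 4 = 1) {p : Fin n × Fin n} (hp : p ∈ ttArcs n)
    (h : p.2.val = n - 1 ∧ p.1.val % 2 = n % 2) :
    IsColliderMotif ({p, phiF p} : Finset (Fin n × Fin n)) ∧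
      ¬ IsForkMotif ({p, phiF p} : Finset (Fin n × Fin n)) := by
  obtain ⟨h1, h2⟩ := phiN_res hadm (mem_ttArcs.1 hp) p.2.isLt h
  have hv := phiF_val hp
  have e2 : (phiF p).2 = p.2 := Fin.ext (by rw [hv.2, h1])
  have hne1 : (phiF p).1 ≠ p.1 := by
    intro he
    apply h2
    rw [← hv.1, he]
  constructor
  · refine ⟨p.1, (phiF p).1, p.2, mem_ttArcs.1 hp, ?_, fun he => hne1 he.symm, ?_⟩
    · show (phiF p).1.val < p.2.val
      have := mem_ttArcs.1 (phiF_mem hp)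
      rw [← e2]; exact this
    · have e3 : (((phiF p).1, p.2) : Fin n × Fin n) = phiF p := by rw [← e2]
      rw [Prod.mk.eta, e3]
  · rintro ⟨a, b, c, _, _, hbc, hset⟩
    have hp1 : p ∈ ({(a, b), (a, c)} : Finset (Fin n × Fin n)) := by
      rw [← hset]; simp
    have hp2 : phiF p ∈ ({(a, b), (a, c)} : Finset (Fin n × Fin n)) := by
      rw [← hset]; simp
    rw [Finset.mem_insert, Finset.mem_singleton] at hp1 hp2
    apply hne1
    have ha1 : p.1 = a := by rcases hp1 with h' | h' <;> rw [h']
    have ha2 : (phiF p).1 = a := by rcases hp2 with h' | h' <;> rw [h']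
    rw [ha1, ha2]

lemma card_filter_fin (n : ℕ) (q : ℕ → Prop) [DecidablePred q] :
    (Finset.univ.filter (fun j : Fin n => q j.val)).card =
      ((Finset.range n).filter q).card := by
  rw [← Finset.card_map ⟨Fin.val, Fin.val_injective⟩]
  congr 1
  ext a
  simp only [Finset.mem_map, Finset.mem_filter, Finset.mem_univ, true_and,
    Function.Embedding.coeFn_mk, Finset.mem_range]
  constructor
  · rintro ⟨j, hq, rfl⟩; exact ⟨j.isLt, hq⟩
  · rintro ⟨ha, hq⟩; exact ⟨⟨a, ha⟩, hq, rfl⟩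

lemma mk_injective {n : ℕ} (w : Fin n) : Function.Injective (fun j : Fin n => (w, j)) :=
  fun a b h => by simpa using h

lemma filter_fst_eq {n : ℕ} (w : Fin n) :
    (ttArcs n).filter (fun p => p.1 = w) =
      (Finset.univ.filter fun j : Fin n => w.val < j.val).image (fun j => (w, j)) := by
  ext p
  simp only [Finset.mem_filter, Finset.mem_image, Finset.mem_univ, true_and]
  constructor
  · rintro ⟨hp, h2⟩
    exact ⟨p.2, by rw [← h2]; exact mem_ttArcs.1 hp, by rw [← h2]⟩
  · rintro ⟨j, hj, rfl⟩
    exact ⟨mem_ttArcs.2 hj, rfl⟩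

lemma card_filter_fst {n : ℕ} (w : Fin n) :
    ((ttArcs n).filter (fun p => p.1 = w)).card = n - 1 - w.val := by
  rw [filter_fst_eq, Finset.card_image_of_injective _ (mk_injective w),
    card_filter_fin n (fun x => w.val < x)]
  have he : (Finset.range n).filter (fun x => w.val < x) = Finset.Ico (w.val + 1) n := by
    ext a
    simp only [Finset.mem_filter, Finset.mem_range, Finset.mem_Ico]
    omega
  rw [he, Nat.card_Ico]
  omega

lemma filter_fork_fst_eq {n : ℕ} (w : Fin n) :
    ((ttArcs n).filter (fun p => ¬(p.2.val = n - 1 ∧ p.1.val % 2 = n % 2))).filter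
        (fun p => p.1 = w) =
      (Finset.univ.filter fun j : Fin n =>
        w.val < j.val ∧ ¬(j.val = n - 1 ∧ w.val % 2 = n % 2)).image (fun j => (w, j)) := by
  ext p
  simp only [Finset.mem_filter, Finset.mem_image, Finset.mem_univ, true_and]
  constructor
  · rintro ⟨⟨hp, hr⟩, h2⟩
    rw [h2] at hr
    exact ⟨p.2, ⟨by rw [← h2]; exact mem_ttArcs.1 hp, hr⟩, by rw [← h2]⟩
  · rintro ⟨j, ⟨hj, hr⟩, rfl⟩
    exact ⟨⟨mem_ttArcs.2 hj, hr⟩, rfl⟩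

lemma card_filter_fork_fst {n : ℕ} (w : Fin n) :
    (((ttArcs n).filter (fun p => ¬(p.2.val = n - 1 ∧ p.1.val % 2 = n % 2))).filter
        (fun p => p.1 = w)).card = 2 * ((n - 1 - w.val) / 2) := by
  rw [filter_fork_fst_eq, Finset.card_image_of_injective _ (mk_injective w),
    card_filter_fin n (fun x => w.val < x ∧ ¬(x = n - 1 ∧ w.val % 2 = n % 2))]
  have hw := w.isLt
  by_cases hr : w.val % 2 = n % 2
  · have he : (Finset.range n).filter
        (fun x => w.val < x ∧ ¬(x = n - 1 ∧ w.val % 2 = n % 2)) =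
        Finset.Ico (w.val + 1) (n - 1) := by
      ext a
      simp only [Finset.mem_filter, Finset.mem_range, Finset.mem_Ico]
      constructor
      · rintro ⟨h1, h2, h3⟩; omega
      · rintro ⟨h1, h2⟩; exact ⟨by omega, h1, by omega⟩
    rw [he, Nat.card_Ico]
    omega
  · have he : (Finset.range n).filter
        (fun x => w.val < x ∧ ¬(x = n - 1 ∧ w.val % 2 = n % 2)) =
        Finset.Ico (w.val + 1) n := by
      ext a
      simp only [Finset.mem_filter, Finset.mem_range, Finset.mem_Ico]
      constructor
      · rintro ⟨h1, h2, _⟩; omega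
      · rintro ⟨h1, h2⟩; exact ⟨by omega, h1, by omega⟩
    rw [he, Nat.card_Ico]
    omega

lemma sum_halves (n : ℕ) : ∑ d ∈ Finset.range n, d / 2 = (n / 2) * ((n - 1) / 2) := by
  induction n with
  | zero => simp
  | succ n ih =>
    rw [Finset.sum_range_succ, ih, Nat.add_sub_cancel]
    rcases Nat.even_or_odd n with ⟨k, rfl⟩ | ⟨k, rfl⟩
    · have h1 : (k + k - 1) / 2 = k - 1 := by omega
      have h2 : (k + k) / 2 = k := by omega
      have h3 : (k + k + 1) / 2 = k := by omega
      rw [h1, h2, h3]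
      cases k with
      | zero => simp
      | succ m => simp only [Nat.succ_sub_one]; ring
    · have h1 : (2 * k + 1) / 2 = k := by omega
      have h2 : (2 * k + 1 - 1) / 2 = k := by omega
      have h3 : (2 * k + 1 + 1) / 2 = k + 1 := by omega
      rw [h1, h2, h3]
      ring

lemma target_eq (n : ℕ) :
    (if Even n then n * (n - 2) / 4 else (n - 1) ^ 2 / 4) = (n / 2) * ((n - 1) / 2) := by
  split_ifs with h
  · obtain ⟨k, rfl⟩ := h
    cases k with
    | zero => simp
    | succ m =>
      have h1 : (m + 1 + (m + 1)) * (m + 1 + (m + 1) - 2) = 4 * ((m + 1) * m) := by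
        have hx : m + 1 + (m + 1) - 2 = 2 * m := by omega
        rw [hx]; ring
      have h2 : (m + 1 + (m + 1)) / 2 = m + 1 := by omega
      have h3 : (m + 1 + (m + 1) - 1) / 2 = m := by omega
      rw [h1, h2, h3, Nat.mul_div_cancel_left _ (by norm_num)]
  · obtain ⟨k, rfl⟩ := Nat.odd_iff.2 (Nat.not_even_iff.1 h)
    have h1 : (2 * k + 1 - 1) ^ 2 = 4 * (k * k) := by
      have hx : 2 * k + 1 - 1 = 2 * k := by omega
      rw [hx]; ring
    have h2 : (2 * k + 1) / 2 = k := by omega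
    have h3 : (2 * k + 1 - 1) / 2 = k := by omega
    rw [h1, h2, h3, Nat.mul_div_cancel_left _ (by norm_num)]

theorem tt_max_forks_in_decomposition (n : ℕ) (hadm : Admissible n) :
    IsGreatest
      {m : ℕ | ∃ P : Finset (Finset (Fin n × Fin n)),
        IsTTDecomposition P ∧ (∀ b ∈ P, IsChainMotif b ∨ IsColliderMotif b ∨ IsForkMotif b) ∧ (P.filter IsForkMotif).card = m}
      (if Even n then n * (n - 2) / 4 else (n - 1) ^ 2 / 4) := by
  have hadm' : n % 4 = 0 ∨ n % 4 = 1 := hadm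
  have htarget : (if Even n then n * (n - 2) / 4 else (n - 1) ^ 2 / 4)
      = ∑ d ∈ Finset.range n, d / 2 := by rw [sum_halves, target_eq]
  constructor
  · -- membership : the explicit decomposition
    refine ⟨(ttArcs n).image (fun p => ({p, phiF p} : Finset (Fin n × Fin n))),
      ⟨?_, ?_⟩, ?_, ?_⟩
    · -- pairwise disjoint
      intro B1 h1 B2 h2 hne
      rw [Finset.mem_coe, Finset.mem_image] at h1 h2
      obtain ⟨a, ha, rfl⟩ := h1
      obtain ⟨b, hb, rfl⟩ := h2
      refine Finset.disjoint_left.2 fun {x} hx1 hx2 => hne ?_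
      simp only [id_eq] at hx1 hx2
      rw [Finset.mem_insert, Finset.mem_singleton] at hx1 hx2
      show ({a, phiF a} : Finset (Fin n × Fin n)) = {b, phiF b}
      rcases hx1 with rfl | rfl
      · rcases hx2 with h | h
        · rw [h]
        · rw [h, phiF_invol hadm' hb]
          exact Finset.pair_comm _ _
      · rcases hx2 with h | h
        · rw [← h, phiF_invol hadm' ha]
          exact Finset.pair_comm _ _
        · have hab : a = b := by
            rw [← phiF_invol hadm' ha, h]
            exact phiF_invol hadm' hb
          rw [hab]
    · -- union is the arc set
      ext x
      rw [Finset.mem_sup]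
      constructor
      · rintro ⟨B, hB, hxB⟩
        obtain ⟨a, ha, rfl⟩ := Finset.mem_image.1 hB
        rcases Finset.mem_insert.1 hxB with rfl | hx'
        · exact ha
        · rw [Finset.mem_singleton] at hx'
          rw [hx']
          exact phiF_mem ha
      · intro hx
        exact ⟨{x, phiF x}, Finset.mem_image_of_mem _ hx, Finset.mem_insert_self _ _⟩
    · -- every block is a motif
      intro b hb
      obtain ⟨a, ha, rfl⟩ := Finset.mem_image.1 hb
      by_cases hres : a.2.val = n - 1 ∧ a.1.val % 2 = n % 2
      · exact Or.inr (Or.inl (blk_res hadm' ha hres).1)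
      · exact Or.inr (Or.inr (blk_fork ha hres))
    · -- count of forks
      have hPF : (((ttArcs n).image
            (fun p => ({p, phiF p} : Finset (Fin n × Fin n)))).filter IsForkMotif)
          = ((ttArcs n).filter
              (fun p => ¬(p.2.val = n - 1 ∧ p.1.val % 2 = n % 2))).image
            (fun p => ({p, phiF p} : Finset (Fin n × Fin n))) := by
        ext B
        simp only [Finset.mem_filter, Finset.mem_image]
        constructor
        · rintro ⟨⟨a, ha, rfl⟩, hfork⟩
          exact ⟨a, ⟨ha, fun hres => (blk_res hadm' ha hres).2 hfork⟩, rfl⟩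
        · rintro ⟨a, ⟨ha, hres⟩, rfl⟩
          exact ⟨⟨a, ha, rfl⟩, blk_fork ha hres⟩
      rw [hPF]
      set F := (ttArcs n).filter
        (fun p => ¬(p.2.val = n - 1 ∧ p.1.val % 2 = n % 2)) with hFdef
      have hfib : ∀ B ∈ F.image (fun p => ({p, phiF p} : Finset (Fin n × Fin n))),
          (F.filter (fun x => ({x, phiF x} : Finset (Fin n × Fin n)) = B)).card = 2 := by
        intro B hB
        obtain ⟨a, haF, rfl⟩ := Finset.mem_image.1 hB
        obtain ⟨ha, hres⟩ := Finset.mem_filter.1 haF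
        have hfeq : F.filter (fun x => ({x, phiF x} : Finset (Fin n × Fin n)) = {a, phiF a})
            = {a, phiF a} := by
          ext x
          rw [Finset.mem_filter, Finset.mem_insert, Finset.mem_singleton]
          constructor
          · rintro ⟨_, heq⟩
            have hx : x ∈ ({x, phiF x} : Finset (Fin n × Fin n)) :=
              Finset.mem_insert_self _ _
            rw [heq, Finset.mem_insert, Finset.mem_singleton] at hx
            exact hx
          · rintro (rfl | rfl)
            · exact ⟨haF, rfl⟩
            · refine ⟨Finset.mem_filter.2 ⟨phiF_mem ha, phiF_fork_cond ha hres⟩, ?_⟩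
              rw [phiF_invol hadm' ha]
              exact Finset.pair_comm _ _
        rw [hfeq]
        exact Finset.card_pair (Ne.symm (phiF_ne hadm' ha))
      have h21 : F.card =
          (F.image (fun p => ({p, phiF p} : Finset (Fin n × Fin n)))).card * 2 := by
        rw [Finset.card_eq_sum_card_fiberwise
          (fun a ha => Finset.mem_image_of_mem (fun p => ({p, phiF p} : Finset _)) ha)]
        rw [Finset.sum_congr rfl hfib, Finset.sum_const, smul_eq_mul]
      have hFcard : F.card = 2 * ∑ d ∈ Finset.range n, d / 2 := by
        rw [Finset.card_eq_sum_card_fiberwise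
          (f := fun p => p.1) (t := Finset.univ) (fun a _ => Finset.mem_univ _)]
        rw [Finset.sum_congr rfl (fun w _ => card_filter_fork_fst w)]
        rw [Fin.sum_univ_eq_sum_range (fun v => 2 * ((n - 1 - v) / 2)) n, ← Finset.mul_sum]
        congr 1
        exact Finset.sum_range_reflect (fun d => d / 2) n
      rw [htarget]
      omega
  · -- upper bound
    rintro m ⟨P, ⟨hdisj, hsup⟩, hmot, rfl⟩
    rw [htarget]
    have hstep : ∀ B ∈ P.filter IsForkMotif,
        (B.sup fun a : Fin n × Fin n => a.1.val) ∈ Finset.range n := by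
      intro B hB
      obtain ⟨_, i, j, k, _, _, _, rfl⟩ := Finset.mem_filter.1 hB
      have hs : (({(i, j), (i, k)} : Finset (Fin n × Fin n)).sup
          fun a => a.1.val) = i.val := by simp
      rw [hs, Finset.mem_range]
      exact i.isLt
    rw [Finset.card_eq_sum_card_fiberwise hstep]
    have hbound : ∀ v ∈ Finset.range n,
        ((P.filter IsForkMotif).filter
          (fun B => (B.sup fun a : Fin n × Fin n => a.1.val) = v)).card
          ≤ (n - 1 - v) / 2 := by
      intro v hv
      rw [Finset.mem_range] at hv
      set w : Fin n := ⟨v, hv⟩ with hw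
      set Fv := (P.filter IsForkMotif).filter
        (fun B => (B.sup fun a : Fin n × Fin n => a.1.val) = v) with hFv
      have hsub : ∀ B ∈ Fv, B ⊆ (ttArcs n).filter (fun p => p.1 = w) := by
        intro B hB x hx
        obtain ⟨hB1, hBsup⟩ := Finset.mem_filter.1 hB
        obtain ⟨hBP, hfork⟩ := Finset.mem_filter.1 hB1
        obtain ⟨i, j, k, hij, hik, hjk, rfl⟩ := hfork
        have hs : (({(i, j), (i, k)} : Finset (Fin n × Fin n)).sup
            fun a => a.1.val) = i.val := by simp
        rw [hs] at hBsup
        have hxtt : x ∈ ttArcs n := by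
          have hle : ({(i, j), (i, k)} : Finset (Fin n × Fin n)) ⊆ ttArcs n := by
            rw [← hsup]
            exact Finset.le_sup (f := id) hBP
          exact hle hx
        refine Finset.mem_filter.2 ⟨hxtt, ?_⟩
        have hiw : i = w := Fin.ext hBsup
        rcases Finset.mem_insert.1 hx with rfl | hx'
        · exact hiw
        · rw [Finset.mem_singleton] at hx'
          rw [hx']
          exact hiw
      have hdisj2 : ∀ B1 ∈ Fv, ∀ B2 ∈ Fv, B1 ≠ B2 → Disjoint (id B1) (id B2) := by
        intro B1 h1 B2 h2 hne
        exact hdisj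
          (Finset.mem_coe.2 (Finset.filter_subset _ _ (Finset.filter_subset _ _ h1)))
          (Finset.mem_coe.2 (Finset.filter_subset _ _ (Finset.filter_subset _ _ h2))) hne
      have hcard2 : ∀ B ∈ Fv, B.card = 2 := by
        intro B hB
        obtain ⟨hB1, _⟩ := Finset.mem_filter.1 hB
        obtain ⟨_, i, j, k, _, _, hjk, rfl⟩ := Finset.mem_filter.1 hB1
        exact Finset.card_pair (fun he => hjk (Prod.ext_iff.1 he).2)
      have hbu : (Fv.biUnion id).card = 2 * Fv.card := by
        rw [Finset.card_biUnion hdisj2]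
        simp only [id_eq]
        rw [Finset.sum_congr rfl hcard2, Finset.sum_const, smul_eq_mul, mul_comm]
      have hsub2 : Fv.biUnion id ⊆ (ttArcs n).filter (fun p => p.1 = w) := by
        intro x hx
        obtain ⟨B, hB, hxB⟩ := Finset.mem_biUnion.1 hx
        exact hsub B hB hxB
      have hle2 := Finset.card_le_card hsub2
      rw [hbu, card_filter_fst w] at hle2
      have hwv : (w : ℕ) = v := rfl
      rw [hwv] at hle2
      omega
    exact le_trans (Finset.sum_le_sum hbound)
      (le_of_eq (Finset.sum_range_reflect (fun d => d / 2) n))
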